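/- arXiv:1405.3948 — 13 statements merged into one kernel-verified Lean document; each statement's English description precedes it below -/
import Mathlib

section
/- Let F : ℝ → ℝ. Then F* is finite-valued and additive (F*(u+v) = F*(u) + F*(v) ∈ ℝ for all u, v ∈ ℝ) if and only if 𝔸_F = ℝ and F*(u) = G(u) for all u ∈ ℝ (i.e. for every u the limit lim_{x→+∞}(F(u+x) − F(x)) exists, is finite, and equals F*(u)). -/
open Filter Topology

/-- `AF F` is the set of `u` for which `lim_{x→∞} (F(u+x) - F(x))` exists and is finite. -/
def AF (F : ℝ → ℝ) : Set ℝ :=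
  {u | ∃ L : ℝ, Tendsto (fun x => F (u + x) - F x) atTop (𝓝 L)}

/-- `Gfun F u = lim_{x→∞} (F(u+x) - F(x))` (when it exists). -/
noncomputable def Gfun (F : ℝ → ℝ) (u : ℝ) : ℝ :=
  limUnder atTop (fun x => F (u + x) - F x)

/-- `Fstar F u = limsup_{x→∞} (F(u+x) - F(x))`, with values in the extended reals. -/
noncomputable def Fstar (F : ℝ → ℝ) (u : ℝ) : EReal :=
  limsup (fun x => ((F (u + x) - F x : ℝ) : EReal)) atTop

/-! A finite additive `F*` is odd, and `-F*(-u)` is the corresponding liminf, so limsup and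
liminf of `F(u+x) - F(x)` agree and the limit exists. Conversely, limits of increments add up
because `F(u+v+x) - F(x) = (F(u+(v+x)) - F(v+x)) + (F(v+x) - F(x))`. -/

section

variable {F : ℝ → ℝ}

lemma Fstar_eq_of_tendsto {u L : ℝ} (h : Tendsto (fun x => F (u + x) - F x) atTop (𝓝 L)) :
    Fstar F u = L :=
  (EReal.tendsto_coe.mpr h).limsup_eq

lemma Gfun_eq_of_tendsto {u L : ℝ} (h : Tendsto (fun x => F (u + x) - F x) atTop (𝓝 L)) :
    Gfun F u = L :=
  h.limUnder_eq

lemma tendsto_Gfun_of_mem_AF {u : ℝ} (hu : u ∈ AF F) :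
    Tendsto (fun x => F (u + x) - F x) atTop (𝓝 (Gfun F u)) := by
  obtain ⟨L, hL⟩ := hu
  rwa [Gfun_eq_of_tendsto hL]

lemma Fstar_zero (F : ℝ → ℝ) : Fstar F 0 = 0 := by
  simpa using Fstar_eq_of_tendsto (F := F) (u := 0) (L := 0) (by simp)

lemma liminf_eq_neg_Fstar_neg (F : ℝ → ℝ) (u : ℝ) :
    liminf (fun x => ((F (u + x) - F x : ℝ) : EReal)) atTop = -Fstar F (-u) := by
  have hshift : Fstar F (-u) = limsup (fun x => ((F x - F (u + x) : ℝ) : EReal)) atTop := by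
    have hcomp : (fun y => ((F (-u + y) - F y : ℝ) : EReal)) ∘ (· + u) =
        fun x => ((F x - F (u + x) : ℝ) : EReal) := by
      funext x; simp [add_comm x u]
    rw [Fstar, ← hcomp, limsup_comp, map_add_atTop_eq]
  have hneg : (fun x => ((F x - F (u + x) : ℝ) : EReal)) =
      -fun x => ((F (u + x) - F x : ℝ) : EReal) := by
    funext x
    rw [Pi.neg_apply, ← EReal.coe_neg, neg_sub]
  rw [hshift, hneg, EReal.limsup_neg, neg_neg]

lemma tendsto_of_Fstar_neg_eq_neg {u r : ℝ} (hu : Fstar F u = r) (hneg : Fstar F (-u) = -r) :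
    Tendsto (fun x => F (u + x) - F x) atTop (𝓝 r) := by
  have hliminf : liminf (fun x => ((F (u + x) - F x : ℝ) : EReal)) atTop = r := by
    rw [liminf_eq_neg_Fstar_neg, hneg, neg_neg]
  exact EReal.tendsto_coe.mp (tendsto_of_liminf_eq_limsup hliminf hu)

lemma tendsto_add_of_tendsto {u v a b : ℝ}
    (hu : Tendsto (fun x => F (u + x) - F x) atTop (𝓝 a))
    (hv : Tendsto (fun x => F (v + x) - F x) atTop (𝓝 b)) :
    Tendsto (fun x => F (u + v + x) - F x) atTop (𝓝 (a + b)) := by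
  have hu' : Tendsto (fun x => F (u + (v + x)) - F (v + x)) atTop (𝓝 a) :=
    hu.comp (tendsto_atTop_add_const_left _ v tendsto_id)
  refine (hu'.add hv).congr fun x => ?_
  ring_nf

end

/-- Proposition 1 (iv): `F*` is finite-valued and additive iff `AF F = ℝ` and `F* = G`. -/
theorem additive_kernel_iv (F : ℝ → ℝ) :
    ((∀ u : ℝ, ∃ r : ℝ, Fstar F u = (r : EReal)) ∧
      (∀ u v : ℝ, Fstar F (u + v) = Fstar F u + Fstar F v)) ↔
    (AF F = Set.univ ∧ ∀ u : ℝ, Fstar F u = ((Gfun F u : ℝ) : EReal)) := by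
  constructor
  · rintro ⟨hfin, hadd⟩
    have hlim : ∀ u, ∃ r : ℝ, Fstar F u = r ∧ Tendsto (fun x => F (u + x) - F x) atTop (𝓝 r) := by
      intro u
      obtain ⟨r, hr⟩ := hfin u
      obtain ⟨s, hs⟩ := hfin (-u)
      have hsum : ((r + s : ℝ) : EReal) = 0 := by
        rw [EReal.coe_add, ← hr, ← hs, ← hadd, add_neg_cancel, Fstar_zero]
      have hsr : s = -r := eq_neg_of_add_eq_zero_right (EReal.coe_eq_zero.mp hsum)
      exact ⟨r, hr, tendsto_of_Fstar_neg_eq_neg hr (by rw [hs, hsr, EReal.coe_neg])⟩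
    refine ⟨Set.eq_univ_of_forall fun u => ?_, fun u => ?_⟩ <;> obtain ⟨r, hr, hrt⟩ := hlim u
    · exact ⟨r, hrt⟩
    · rw [hr, Gfun_eq_of_tendsto hrt]
  · rintro ⟨hAF, hG⟩
    have hlim : ∀ u, Tendsto (fun x => F (u + x) - F x) atTop (𝓝 (Gfun F u)) := fun u =>
      tendsto_Gfun_of_mem_AF (hAF ▸ Set.mem_univ u)
    refine ⟨fun u => ⟨Gfun F u, hG u⟩, fun u v => ?_⟩
    rw [Fstar_eq_of_tendsto (tendsto_add_of_tendsto (hlim u) (hlim v)), hG u, hG v, EReal.coe_add]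
end

section
/- Proposition 3: Let 𝔸 be a dense additive subgroup of ℝ and let G : 𝔸 → ℝ be additive on 𝔸 (G(a+b) = G(a) + G(b) for all a, b ∈ 𝔸) and right-continuous at 0 relative to 𝔸 (G(δ) → 0 as δ → 0 through positive elements of 𝔸). Then G is linear on 𝔸: there exists c ∈ ℝ such that G(u) = cu for all u ∈ 𝔸. -/
/-!
Fix `p > 0` in `A` and subtract the linear map `a ↦ (G p / p) * a`. What is left is an additive
map `ψ` on `A` that vanishes at `p`, hence is `p`-periodic, and is continuous at `0` (right-continuity
suffices because additive maps are odd), hence uniformly continuous. So the range of `ψ` is the image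
of the totally bounded set `A ∩ [0, p)`: a bounded additive subgroup of `ℝ`, which must be `0`.
-/

open Filter Topology Set

theorem AddMonoidHom.eq_zero_of_isBounded_range {M : Type*} [AddMonoid M] (f : M →+ ℝ)
    (hf : Bornology.IsBounded (Set.range f)) : f = 0 := by
  obtain ⟨C, hC⟩ := isBounded_iff_forall_norm_le.mp hf
  ext x
  by_contra hx
  obtain ⟨n, hn⟩ := exists_nat_gt (C / |f x|)
  have hCn := hC (f (n • x)) ⟨_, rfl⟩
  rw [map_nsmul, Real.norm_eq_abs, nsmul_eq_mul, abs_mul, Nat.abs_cast] at hCn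
  have := (div_lt_iff₀ (abs_pos.2 hx)).1 hn
  linarith

namespace AddSubgroup

variable {A : AddSubgroup ℝ}

theorem tendsto_nhds_zero_of_forall_pos_abs_lt (φ : A →+ ℝ)
    (hφ : ∀ ε > (0 : ℝ), ∃ δ > (0 : ℝ), ∀ a : A, 0 < (a : ℝ) → (a : ℝ) < δ → |φ a| < ε) :
    Tendsto φ (𝓝 0) (𝓝 0) := by
  rw [Metric.tendsto_nhds_nhds]
  intro ε hε
  obtain ⟨δ, hδ, h⟩ := hφ ε hε
  refine ⟨δ, hδ, fun a ha => ?_⟩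
  rw [Subtype.dist_eq, ZeroMemClass.coe_zero, dist_zero_right, Real.norm_eq_abs] at ha
  rw [dist_zero_right, Real.norm_eq_abs]
  rcases lt_trichotomy (a : ℝ) 0 with hneg | hzero | hpos
  · simpa using h (-a) (by simpa using hneg) (by simpa [abs_of_neg hneg] using ha)
  · simpa [ZeroMemClass.coe_eq_zero.1 hzero] using hε
  · exact h a hpos (by simpa [abs_of_pos hpos] using ha)

theorem totallyBounded_range_of_uniformContinuous {E : Type*} [AddGroup E] [UniformSpace E]
    (ψ : A →+ E) (hψ : UniformContinuous ψ) {p : A} (hp : 0 < (p : ℝ)) (hψp : ψ p = 0) :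
    TotallyBounded (range ψ) := by
  have hIco : TotallyBounded (((↑) : A → ℝ) ⁻¹' Ico 0 (p : ℝ)) :=
    totallyBounded_preimage isUniformEmbedding_subtype_val.isUniformInducing
      (isCompact_Icc.totallyBounded.subset Ico_subset_Icc_self)
  refine (hIco.image hψ).subset ?_
  rintro _ ⟨a, rfl⟩
  refine ⟨a - toIcoDiv hp 0 a • p, ?_, by simp [hψp]⟩
  simpa [self_sub_toIcoDiv_zsmul] using toIcoMod_mem_Ico' hp (a : ℝ)

theorem exists_eq_mul_of_tendsto_zero (φ : A →+ ℝ) (hφ : Tendsto φ (𝓝 0) (𝓝 0)) :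
    ∃ c : ℝ, ∀ a : A, φ a = c * a := by
  by_cases hA : ∃ p : A, 0 < (p : ℝ)
  · obtain ⟨p, hp⟩ := hA
    set c := φ p / p
    let ψ : A →+ ℝ := φ - (AddMonoidHom.mulLeft c).comp A.subtype
    have hψ : Tendsto (fun a => φ a - c * a) (𝓝 0) (𝓝 0) := by
      simpa using hφ.sub ((continuous_subtype_val.tendsto (0 : A)).const_mul c)
    have hψp : ψ p = 0 := by simp [ψ, c, hp.ne']
    have hψ0 : ψ = 0 := ψ.eq_zero_of_isBounded_range
      (totallyBounded_range_of_uniformContinuous ψ (uniformContinuous_of_tendsto_zero hψ) hp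
        hψp).isBounded
    exact ⟨c, fun a => sub_eq_zero.1 (DFunLike.congr_fun hψ0 a)⟩
  · push Not at hA
    refine ⟨0, fun a => ?_⟩
    have ha : a = 0 := Subtype.ext (le_antisymm (hA a) (by simpa using hA (-a)))
    simp [ha]

end AddSubgroup

theorem prop3_general (A : AddSubgroup ℝ) (G : ℝ → ℝ)
    (hadd : ∀ a ∈ A, ∀ b ∈ A, G (a + b) = G a + G b)
    (hrc : ∀ ε > (0 : ℝ), ∃ δ > (0 : ℝ), ∀ a : ℝ, a ∈ A → 0 < a → a < δ → |G a| < ε) :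
    ∃ c : ℝ, ∀ u ∈ A, G u = c * u := by
  let φ : A →+ ℝ := AddMonoidHom.mk' (fun a => G a) fun a b => hadd a a.2 b b.2
  have hφ : Tendsto φ (𝓝 0) (𝓝 0) :=
    AddSubgroup.tendsto_nhds_zero_of_forall_pos_abs_lt φ fun ε hε => by
      obtain ⟨δ, hδ, h⟩ := hrc ε hε
      exact ⟨δ, hδ, fun a => h a a.2⟩
  obtain ⟨c, hc⟩ := AddSubgroup.exists_eq_mul_of_tendsto_zero φ hφ
  exact ⟨c, fun u hu => hc ⟨u, hu⟩⟩

/-- Proposition 3: an additive function on a dense additive subgroup of `ℝ`,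
right-continuous at `0` relative to the subgroup, is linear on the subgroup. -/
theorem prop3 (A : AddSubgroup ℝ) (hdense : Dense (A : Set ℝ)) (G : ℝ → ℝ)
    (hadd : ∀ a ∈ A, ∀ b ∈ A, G (a + b) = G a + G b)
    (hrc : ∀ ε > (0 : ℝ), ∃ δ > (0 : ℝ), ∀ a : ℝ, a ∈ A → 0 < a → a < δ → |G a| < ε) :
    ∃ c : ℝ, ∀ u ∈ A, G u = c * u :=
  prop3_general A G hadd hrc
end

section
/- Proposition 5 (Unique extension): Let Σ ⊆ ℝ be dense and closed under integer scaling (nσ ∈ Σ for all σ ∈ Σ and n ∈ ℤ), and suppose G : Σ → ℝ is linear: G(σ) = cσ for some fixed c ∈ ℝ and all σ ∈ Σ. If S : ℝ → ℝ is subadditive with S(0+) = 0 and S extends G (S(σ) = cσ for all σ ∈ Σ), then S(u) = cu for all u ∈ ℝ. -/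
open Filter Topology Set

/-!
Subadditivity compares `S u` with `S σ = c σ` for `σ ∈ Σ` next to `u`: approaching `u` from
below gives `S u ≤ c σ + S (u - σ)`, from above `c σ ≤ S u + S (σ - u)`, and both error terms
vanish in the limit because `S (0+) = 0`.
-/

lemma Dense.nhdsWithin_inter_Iio_neBot {A : Set ℝ} (hA : Dense A) (u : ℝ) :
    (𝓝[A ∩ Iio u] u).NeBot := by
  rw [← mem_closure_iff_nhdsWithin_neBot, inter_comm]
  exact closure_minimal (hA.open_subset_closure_inter isOpen_Iio) isClosed_closure (by simp)

lemma Dense.nhdsWithin_inter_Ioi_neBot {A : Set ℝ} (hA : Dense A) (u : ℝ) :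
    (𝓝[A ∩ Ioi u] u).NeBot := by
  rw [← mem_closure_iff_nhdsWithin_neBot, inter_comm]
  exact closure_minimal (hA.open_subset_closure_inter isOpen_Ioi) isClosed_closure (by simp)

lemma tendsto_const_sub_nhdsWithin_Iio (A : Set ℝ) (u : ℝ) :
    Tendsto (fun σ => u - σ) (𝓝[A ∩ Iio u] u) (𝓝[>] 0) := by
  refine tendsto_nhdsWithin_of_tendsto_nhds_of_eventually_within _ ?_ ?_
  · exact tendsto_nhdsWithin_of_tendsto_nhds ((continuous_sub_left u).tendsto' u 0 (sub_self u))
  · filter_upwards [self_mem_nhdsWithin] with σ hσ using sub_pos.2 hσ.2.out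

lemma tendsto_sub_const_nhdsWithin_Ioi (A : Set ℝ) (u : ℝ) :
    Tendsto (fun σ => σ - u) (𝓝[A ∩ Ioi u] u) (𝓝[>] 0) := by
  refine tendsto_nhdsWithin_of_tendsto_nhds_of_eventually_within _ ?_ ?_
  · exact tendsto_nhdsWithin_of_tendsto_nhds ((continuous_sub_right u).tendsto' u 0 (sub_self u))
  · filter_upwards [self_mem_nhdsWithin] with σ hσ using sub_pos.2 hσ.2.out

section Subadditive

variable {S : ℝ → ℝ} {A : Set ℝ} {c : ℝ}

lemma apply_le_mul_of_subadditive (hsub : ∀ u v : ℝ, S (u + v) ≤ S u + S v)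
    (h0 : Tendsto S (𝓝[>] 0) (𝓝 0)) (hA : Dense A) (hle : ∀ σ ∈ A, S σ ≤ c * σ) (u : ℝ) :
    S u ≤ c * u := by
  have := hA.nhdsWithin_inter_Iio_neBot u
  have hlim : Tendsto (fun σ => c * σ + S (u - σ)) (𝓝[A ∩ Iio u] u) (𝓝 (c * u)) := by
    simpa using (tendsto_nhdsWithin_of_tendsto_nhds (tendsto_id.const_mul c)).add
      (h0.comp (tendsto_const_sub_nhdsWithin_Iio A u))
  refine ge_of_tendsto hlim ?_
  filter_upwards [self_mem_nhdsWithin] with σ hσ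
  calc S u = S (σ + (u - σ)) := by rw [add_sub_cancel]
    _ ≤ S σ + S (u - σ) := hsub _ _
    _ ≤ c * σ + S (u - σ) := by gcongr; exact hle σ hσ.1

lemma mul_le_apply_of_subadditive (hsub : ∀ u v : ℝ, S (u + v) ≤ S u + S v)
    (h0 : Tendsto S (𝓝[>] 0) (𝓝 0)) (hA : Dense A) (hle : ∀ σ ∈ A, c * σ ≤ S σ) (u : ℝ) :
    c * u ≤ S u := by
  have := hA.nhdsWithin_inter_Ioi_neBot u
  have hlim : Tendsto (fun σ => c * σ - S (σ - u)) (𝓝[A ∩ Ioi u] u) (𝓝 (c * u)) := by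
    simpa using (tendsto_nhdsWithin_of_tendsto_nhds (tendsto_id.const_mul c)).sub
      (h0.comp (tendsto_sub_const_nhdsWithin_Ioi A u))
  refine le_of_tendsto hlim ?_
  filter_upwards [self_mem_nhdsWithin] with σ hσ
  calc c * σ - S (σ - u) ≤ S σ - S (σ - u) := by gcongr; exact hle σ hσ.1
    _ = S (u + (σ - u)) - S (σ - u) := by rw [add_sub_cancel]
    _ ≤ S u := by linarith [hsub u (σ - u)]

end Subadditive

theorem prop5_general (Sig : Set ℝ) (c : ℝ) (S : ℝ → ℝ)
    (hdense : Dense Sig)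
    (hsub : ∀ u v : ℝ, S (u + v) ≤ S u + S v)
    (h0 : Tendsto S (𝓝[>] (0 : ℝ)) (𝓝 0))
    (hext : ∀ σ ∈ Sig, S σ = c * σ) :
    ∀ u : ℝ, S u = c * u := fun u =>
  le_antisymm
    (apply_le_mul_of_subadditive hsub h0 hdense (fun σ hσ => (hext σ hσ).le) u)
    (mul_le_apply_of_subadditive hsub h0 hdense (fun σ hσ => (hext σ hσ).ge) u)

/-- Proposition 5 (Unique extension): a subadditive `S` with `S(0+) = 0` extending a linear
function on a dense set closed under integer scaling is linear everywhere. -/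
theorem prop5 (Sig : Set ℝ) (c : ℝ) (S : ℝ → ℝ)
    (hdense : Dense Sig)
    (hscale : ∀ σ ∈ Sig, ∀ n : ℤ, (n : ℝ) * σ ∈ Sig)
    (hsub : ∀ u v : ℝ, S (u + v) ≤ S u + S v)
    (h0 : Tendsto S (𝓝[>] (0 : ℝ)) (𝓝 0))
    (hext : ∀ σ ∈ Sig, S σ = c * σ) :
    ∀ u : ℝ, S u = c * u :=
  prop5_general Sig c S hdense hsub h0 hext
end

section
/- Theorem 2 (On linearity): Let S : ℝ → ℝ be subadditive with S(0+) = 0. If, for some dense additive subgroup 𝔸 of ℝ, the restriction of S to 𝔸 is additive (S(a+b) = S(a) + S(b) for all a, b ∈ 𝔸) and right-continuous relative to 𝔸 (at each a ∈ 𝔸, S(x) → S(a) as x → a through elements of 𝔸 with x > a), then S is linear on ℝ: S(u) = cu for some c ∈ ℝ and all u ∈ ℝ. -/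
/-!
On the dense subgroup `A`, `S` is additive and, since `S(0+) = 0`, bounded on `A ∩ [0, e)` for a
small `e ∈ A`; the Archimedean division `n a = ⌊n a / e⌋ e + r` then forces `S a = (S e / e) a`
on `A`. Off `A`, subadditivity squeezes `S u` between `S a - S (a - u)` and `S a + S (u - a)` for
`a ∈ A` close to `u` on either side, and both error terms vanish as `a → u`.
-/

open Filter Topology Set

section Dense

variable {α : Type*} [TopologicalSpace α] [LinearOrder α] [OrderTopology α] [DenselyOrdered α]
  {D : Set α}

theorem Dense.nhdsWithin_inter_Iio_neBot_s7 [NoMinOrder α] (hD : Dense D) (u : α) :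
    (𝓝[D ∩ Iio u] u).NeBot := by
  rw [← mem_closure_iff_nhdsWithin_neBot, inter_comm]
  exact closure_minimal (hD.open_subset_closure_inter isOpen_Iio) isClosed_closure
    (by simp [closure_Iio])

theorem Dense.nhdsWithin_inter_Ioi_neBot_s7 [NoMaxOrder α] (hD : Dense D) (u : α) :
    (𝓝[D ∩ Ioi u] u).NeBot := by
  rw [← mem_closure_iff_nhdsWithin_neBot, inter_comm]
  exact closure_minimal (hD.open_subset_closure_inter isOpen_Ioi) isClosed_closure
    (by simp [closure_Ioi])

end Dense

theorem eq_zero_of_forall_nat_mul_abs_le {x C : ℝ} (h : ∀ n : ℕ, n * |x| ≤ C) : x = 0 := by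
  by_contra hx
  obtain ⟨n, hn⟩ := exists_nat_gt (C / |x|)
  have := h n
  rw [div_lt_iff₀ (abs_pos.mpr hx)] at hn
  linarith

-- `n (f a - (f e / e) a) = f r - f e · fract (n a / e)` with `r = n a - ⌊n a / e⌋ e ∈ [0, e)`.
theorem AddMonoidHom.eq_div_mul_of_abs_le_on_Ico {A : AddSubgroup ℝ} (f : A →+ ℝ) {e : A}
    (he : 0 < (e : ℝ)) {M : ℝ} (hM : ∀ r : A, 0 ≤ (r : ℝ) → (r : ℝ) < e → |f r| ≤ M) (a : A) :
    f a = f e / e * a := by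
  refine sub_eq_zero.mp (eq_zero_of_forall_nat_mul_abs_le (C := |f e| + M) fun n ↦ ?_)
  set t : ℝ := n * a / e
  set r : A := n • a - ⌊t⌋ • e
  have hr : (r : ℝ) = e * Int.fract t := by
    simp only [r, ← Int.self_sub_floor, AddSubgroup.coe_sub, AddSubgroup.coe_nsmul,
      AddSubgroup.coe_zsmul, nsmul_eq_mul, zsmul_eq_mul, t]
    field_simp
  have hfr : f r = n * f a - ⌊t⌋ * f e := by simp [r]
  have hfract : |Int.fract t| ≤ 1 := by
    rw [abs_of_nonneg (Int.fract_nonneg t)]; exact (Int.fract_lt_one t).le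
  calc (n : ℝ) * |f a - f e / e * a| = |f r - f e * Int.fract t| := by
        rw [← Nat.abs_cast n, ← abs_mul, hfr, ← Int.self_sub_floor]
        congr 1
        simp only [t]
        field_simp
        ring
    _ ≤ |f r| + |f e| * |Int.fract t| := by rw [← abs_mul]; exact abs_sub _ _
    _ ≤ M + |f e| * 1 := by
        gcongr
        exact hM r (by rw [hr]; exact mul_nonneg he.le (Int.fract_nonneg t))
          (by rw [hr]; exact mul_lt_of_lt_one_right he (Int.fract_lt_one t))
    _ = |f e| + M := by ring

theorem eq_mul_of_subadditive_of_eq_mul_on_dense {S : ℝ → ℝ}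
    (hsub : ∀ u v : ℝ, S (u + v) ≤ S u + S v) (h0 : Tendsto S (𝓝[>] (0 : ℝ)) (𝓝 0))
    {D : Set ℝ} (hD : Dense D) {c : ℝ} (hc : ∀ a ∈ D, S a = c * a) (u : ℝ) : S u = c * u := by
  have hgap {s : Set ℝ} (g : ℝ → ℝ) (hg : ∀ a ∈ s, 0 < g a) (hg0 : Tendsto g (𝓝 u) (𝓝 0)) :
      Tendsto (fun a ↦ S (g a)) (𝓝[s] u) (𝓝 0) :=
    h0.comp <| tendsto_nhdsWithin_iff.mpr
      ⟨hg0.mono_left nhdsWithin_le_nhds, eventually_nhdsWithin_of_forall hg⟩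
  have hlin : Tendsto (fun a ↦ c * a) (𝓝 u) (𝓝 (c * u)) := tendsto_id.const_mul c
  apply le_antisymm
  · have := hD.nhdsWithin_inter_Iio_neBot_s7 u
    have hlim := (hlin.mono_left nhdsWithin_le_nhds).add
      (hgap (s := D ∩ Iio u) (u - ·) (fun a ha ↦ sub_pos.mpr ha.2)
        ((continuous_sub_left u).tendsto' u 0 (sub_self u)))
    refine ge_of_tendsto (by simpa using hlim) (eventually_nhdsWithin_of_forall fun a ha ↦ ?_)
    simpa [hc a ha.1] using hsub a (u - a)
  · have := hD.nhdsWithin_inter_Ioi_neBot_s7 u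
    have hlim := (hlin.mono_left nhdsWithin_le_nhds).sub
      (hgap (s := D ∩ Ioi u) (· - u) (fun a ha ↦ sub_pos.mpr ha.2)
        ((continuous_sub_right u).tendsto' u 0 (sub_self u)))
    refine le_of_tendsto (by simpa using hlim) (eventually_nhdsWithin_of_forall fun a ha ↦ ?_)
    have := hsub u (a - u)
    rw [add_sub_cancel, hc a ha.1] at this
    linarith

theorem theorem2_general (S : ℝ → ℝ) (A : AddSubgroup ℝ)
    (hsub : ∀ u v : ℝ, S (u + v) ≤ S u + S v)
    (h0 : Tendsto S (𝓝[>] (0 : ℝ)) (𝓝 0))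
    (hdense : Dense (A : Set ℝ))
    (hadd : ∀ a ∈ A, ∀ b ∈ A, S (a + b) = S a + S b) :
    ∃ c : ℝ, ∀ u : ℝ, S u = c * u := by
  let f : A →+ ℝ := AddMonoidHom.mk' (fun a ↦ S a) fun a b ↦ hadd a a.2 b b.2
  obtain ⟨δ, hδ, hsmall⟩ := mem_nhdsGT_iff_exists_Ioo_subset.mp
    (h0.eventually (Metric.closedBall_mem_nhds 0 one_pos))
  obtain ⟨e, heA, he, heδ⟩ := hdense.exists_between hδ
  have hbound (r : A) (hr0 : 0 ≤ (r : ℝ)) (hre : (r : ℝ) < e) : |f r| ≤ 1 := by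
    rcases hr0.eq_or_lt with hr | hr
    · obtain rfl : r = 0 := Subtype.ext hr.symm
      simp
    · simpa [f] using hsmall ⟨hr, hre.trans heδ⟩
  exact ⟨S e / e, eq_mul_of_subadditive_of_eq_mul_on_dense hsub h0 hdense fun a ha ↦
    f.eq_div_mul_of_abs_le_on_Ico (e := ⟨e, heA⟩) he hbound ⟨a, ha⟩⟩

/-- Theorem 2 (On linearity): a subadditive `S : ℝ → ℝ` with `S(0+) = 0` whose restriction
to a dense additive subgroup is additive and right-continuous is linear on `ℝ`. -/
theorem theorem2 (S : ℝ → ℝ) (A : AddSubgroup ℝ)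
    (hsub : ∀ u v : ℝ, S (u + v) ≤ S u + S v)
    (h0 : Tendsto S (𝓝[>] (0 : ℝ)) (𝓝 0))
    (hdense : Dense (A : Set ℝ))
    (hadd : ∀ a ∈ A, ∀ b ∈ A, S (a + b) = S a + S b)
    (hrc : ∀ a ∈ A, Tendsto S (𝓝[(A : Set ℝ) ∩ Set.Ioi a] a) (𝓝 (S a))) :
    ∃ c : ℝ, ∀ u : ℝ, S u = c * u :=
  theorem2_general S A hsub h0 hdense hadd
end

section
/- Proposition 6 (On finiteness): Let S : ℝ → ℝ ∪ {±∞} be subadditive and suppose (i) S is finite (|S| < ∞) on a subset Σ ⊆ ℝ that is unbounded below, and (ii) limsup_{u↓0} S(u) ≤ 0. Then S is finite everywhere: S(u) ∈ ℝ for all u ∈ ℝ. -/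
open Filter Topology

/-!
Subadditivity propagates finiteness from above: `S < ⊤` near `0⁺` gives `S < ⊤` on
`(0, ∞)` by writing `u = n • (u / n)`, and then on all of `ℝ` by writing `u = x + (u - x)`
with `x ∈ Σ` below `u`. From below, `S x ≤ S u + S (x - u)` shows that a single value
`S u = ⊥` would force `S = ⊥` everywhere, contradicting finiteness on `Σ`.
-/

theorem nsmul_lt_top_of_subadditive {M : Type*} [AddMonoid M] {S : M → EReal}
    (hsub : ∀ u v, S (u + v) ≤ S u + S v) {v : M} (hv : S v < ⊤) {n : ℕ} (hn : n ≠ 0) :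
    S (n • v) < ⊤ := by
  induction n, Nat.one_le_iff_ne_zero.2 hn using Nat.le_induction with
  | base => simpa using hv
  | succ n hn ih =>
    rw [succ_nsmul]
    exact (hsub _ _).trans_lt (EReal.add_lt_top (ih (by omega)).ne hv.ne)

theorem lt_top_of_subadditive_of_pos {S : ℝ → EReal} (hsub : ∀ u v, S (u + v) ≤ S u + S v)
    (hS : ∀ᶠ u in 𝓝[>] 0, S u < ⊤) {u : ℝ} (hu : 0 < u) : S u < ⊤ := by
  have hdiv : Tendsto (fun n : ℕ ↦ u / n) atTop (𝓝[>] 0) :=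
    tendsto_nhdsWithin_iff.2 ⟨tendsto_const_div_atTop_nhds_zero_nat u,
      (eventually_gt_atTop 0).mono fun _ hn ↦ div_pos hu (Nat.cast_pos.2 hn)⟩
  obtain ⟨n, hSn, hn⟩ := ((hdiv.eventually hS).and (eventually_ne_atTop 0)).exists
  have hu_eq : n • (u / n) = u := by
    rw [nsmul_eq_mul, mul_div_cancel₀ _ (Nat.cast_ne_zero.2 hn)]
  simpa only [hu_eq] using nsmul_lt_top_of_subadditive hsub hSn hn

theorem lt_top_of_subadditive_of_lt {M : Type*} [AddCommGroup M] [LinearOrder M]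
    [IsOrderedAddMonoid M] {S : M → EReal} (hsub : ∀ u v, S (u + v) ≤ S u + S v)
    (hpos : ∀ u, 0 < u → S u < ⊤) {x u : M} (hxu : x < u) (hx : S x < ⊤) : S u < ⊤ := by
  have h := hsub x (u - x)
  rw [add_sub_cancel] at h
  exact h.trans_lt (EReal.add_lt_top hx.ne (hpos _ (sub_pos.2 hxu)).ne)

theorem ne_bot_of_subadditive {M : Type*} [AddGroup M] {S : M → EReal}
    (hsub : ∀ u v, S (u + v) ≤ S u + S v) {x : M} (hx : S x ≠ ⊥) (u : M) : S u ≠ ⊥ := by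
  intro hu
  have h := hsub u (-u + x)
  rw [add_neg_cancel_left, hu, EReal.bot_add] at h
  exact hx (le_bot_iff.1 h)

/-- Proposition 6 (On finiteness): a subadditive extended-real-valued `S`, finite on a set
unbounded below and with `limsup_{u↓0} S(u) ≤ 0`, is finite everywhere. -/
theorem prop6 (S : ℝ → EReal) (Sig : Set ℝ)
    (hsub : ∀ u v : ℝ, S (u + v) ≤ S u + S v)
    (hunb : ∀ b : ℝ, ∃ x ∈ Sig, x < b)
    (hfin : ∀ x ∈ Sig, S x ≠ ⊤ ∧ S x ≠ ⊥)
    (hlimsup : limsup S (𝓝[>] (0 : ℝ)) ≤ 0) :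
    ∀ u : ℝ, S u ≠ ⊤ ∧ S u ≠ ⊥ := by
  have hpos : ∀ u, 0 < u → S u < ⊤ := fun u ↦ lt_top_of_subadditive_of_pos hsub
    (eventually_lt_of_limsup_lt (hlimsup.trans_lt EReal.zero_lt_top))
  intro u
  obtain ⟨x, hx, hxu⟩ := hunb u
  exact ⟨(lt_top_of_subadditive_of_lt hsub hpos hxu (hfin x hx).1.lt_top).ne,
    ne_bot_of_subadditive hsub (hfin x hx).2 u⟩
end

section
/- Proposition 7: Let S : ℝ → ℝ be subadditive. Then: (i) if limsup_{u↓0} S(u) ≤ 0, then S is locally bounded above; (ii) if S is locally bounded above, then S is locally bounded; (iii) if S is locally bounded, then liminf_{t→0} S(t) ≥ 0. -/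
/-!
Subadditivity transports bounds. From `S y ≤ S (y - a) + S a`, an upper bound on a right
neighbourhood of `0` gives one near every point; from `S (x + x) ≤ S y + S (x + x - y)`, an upper
bound near `x` gives a lower bound there; and from `S (n t) ≤ n S t`, a lower bound `-M` near `0`
forces `S t ≥ -M / n` for `t` close enough to `0`, for every `n`.
-/

open Filter Topology

theorem apply_succ_nsmul_le_of_subadditive {G M : Type*} [AddMonoid G] [AddCommMonoid M]
    [PartialOrder M] [IsOrderedAddMonoid M] {S : G → M} (hS : ∀ u v, S (u + v) ≤ S u + S v)
    (n : ℕ) (x : G) : S ((n + 1) • x) ≤ (n + 1) • S x := by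
  induction n with
  | zero => simp
  | succ n ih =>
    calc S ((n + 1 + 1) • x) = S ((n + 1) • x + x) := by rw [succ_nsmul]
      _ ≤ S ((n + 1) • x) + S x := hS _ _
      _ ≤ (n + 1) • S x + S x := add_le_add_left ih _
      _ = (n + 1 + 1) • S x := (succ_nsmul _ _).symm

theorem exists_mem_nhds_abs_le_of_subadditive {G : Type*} [AddCommGroup G] [TopologicalSpace G]
    [IsTopologicalAddGroup G] {S : G → ℝ} (hS : ∀ u v, S (u + v) ≤ S u + S v) {x : G}
    (h : ∃ U ∈ 𝓝 x, ∃ M, ∀ y ∈ U, S y ≤ M) : ∃ U ∈ 𝓝 x, ∃ M, ∀ y ∈ U, |S y| ≤ M := by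
  obtain ⟨U, hU, M, hM⟩ := h
  have hreflect : Tendsto (fun y => x + x - y) (𝓝 x) (𝓝 x) := by
    simpa using (tendsto_const_nhds (x := x + x)).sub (tendsto_id (x := 𝓝 x))
  refine ⟨U ∩ (fun y => x + x - y) ⁻¹' U, inter_mem hU (hreflect hU), max M (M - S (x + x)),
    fun y ⟨hyU, hyU'⟩ => abs_le.2 ⟨?_, (hM y hyU).trans (le_max_left _ _)⟩⟩
  have hsplit : S (x + x) ≤ S y + S (x + x - y) := by
    simpa using hS y (x + x - y)
  linarith [hM _ hyU', le_max_right M (M - S (x + x))]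

section Real

variable {S : ℝ → ℝ}

theorem exists_mem_nhds_le_of_subadditive_of_eventually_le_nhdsGT
    (hS : ∀ u v, S (u + v) ≤ S u + S v) {C : ℝ} (hC : ∀ᶠ u in 𝓝[>] 0, S u ≤ C) (x : ℝ) :
    ∃ U ∈ 𝓝 x, ∃ M, ∀ y ∈ U, S y ≤ M := by
  obtain ⟨δ, hδ, hδC⟩ := mem_nhdsGT_iff_exists_Ioo_subset.1 hC
  set a := x - δ / 2 with ha
  refine ⟨Set.Ioo a (a + δ), Ioo_mem_nhds (by linarith [hδ.out]) (by linarith [hδ.out]), C + S a,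
    fun y hy => ?_⟩
  have hya : S (y - a) ≤ C := hδC ⟨sub_pos.2 hy.1, by linarith [hy.2]⟩
  calc S y = S (y - a + a) := by rw [sub_add_cancel]
    _ ≤ S (y - a) + S a := hS _ _
    _ ≤ C + S a := by linarith

theorem eventually_neg_lt_of_subadditive (hS : ∀ u v, S (u + v) ≤ S u + S v)
    (hbdd : ∃ M, ∀ᶠ t in 𝓝 0, -M ≤ S t) {ε : ℝ} (hε : 0 < ε) : ∀ᶠ t in 𝓝 0, -ε < S t := by
  obtain ⟨M, hM⟩ := hbdd
  obtain ⟨n, hn⟩ := exists_nat_gt (M / ε)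
  have hMn : M < (n + 1) * ε := by
    rw [div_lt_iff₀ hε] at hn
    linarith
  have hscale : Tendsto (fun t => ((n : ℝ) + 1) * t) (𝓝 0) (𝓝 0) := by
    simpa using (tendsto_id (x := 𝓝 (0 : ℝ))).const_mul ((n : ℝ) + 1)
  filter_upwards [hscale.eventually hM] with t ht
  have hmul : S ((n + 1) * t) ≤ (n + 1) * S t := by
    simpa using apply_succ_nsmul_le_of_subadditive hS n t
  by_contra! hSt
  nlinarith [mul_le_mul_of_nonneg_left hSt (by positivity : (0 : ℝ) ≤ n + 1)]

end Real

theorem le_liminf_coe_of_forall_lt_eventually_lt {α : Type*} {l : Filter α} {f : α → ℝ} {a : ℝ}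
    (h : ∀ c < a, ∀ᶠ t in l, c < f t) : (a : EReal) ≤ liminf (fun t => (f t : EReal)) l := by
  rw [le_liminf_iff]
  intro b hb
  obtain ⟨c, hbc, hca⟩ := EReal.lt_iff_exists_real_btwn.1 hb
  filter_upwards [h c (EReal.coe_lt_coe_iff.1 hca)] with t ht
  exact hbc.trans (EReal.coe_lt_coe_iff.2 ht)

/-- Proposition 7: for subadditive `S : ℝ → ℝ`:
(i) `limsup_{u↓0} S(u) ≤ 0` implies `S` locally bounded above;
(ii) locally bounded above implies locally bounded;
(iii) locally bounded implies `liminf_{t→0} S(t) ≥ 0`. -/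
theorem prop7 (S : ℝ → ℝ) (hsub : ∀ u v : ℝ, S (u + v) ≤ S u + S v) :
    (limsup (fun u => (S u : EReal)) (𝓝[>] (0 : ℝ)) ≤ 0 →
      ∀ x : ℝ, ∃ U ∈ 𝓝 x, ∃ M : ℝ, ∀ y ∈ U, S y ≤ M) ∧
    ((∀ x : ℝ, ∃ U ∈ 𝓝 x, ∃ M : ℝ, ∀ y ∈ U, S y ≤ M) →
      ∀ x : ℝ, ∃ U ∈ 𝓝 x, ∃ M : ℝ, ∀ y ∈ U, |S y| ≤ M) ∧
    ((∀ x : ℝ, ∃ U ∈ 𝓝 x, ∃ M : ℝ, ∀ y ∈ U, |S y| ≤ M) →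
      0 ≤ liminf (fun t => (S t : EReal)) (𝓝[≠] (0 : ℝ))) := by
  refine ⟨fun hls => ?_, fun h x => exists_mem_nhds_abs_le_of_subadditive hsub (h x), fun h => ?_⟩
  · have hlt : ∀ᶠ u in 𝓝[>] (0 : ℝ), (S u : EReal) < (1 : ℝ) :=
      eventually_lt_of_limsup_lt (hls.trans_lt (by norm_num))
    exact exists_mem_nhds_le_of_subadditive_of_eventually_le_nhdsGT hsub
      (hlt.mono fun u hu => (EReal.coe_lt_coe_iff.1 hu).le)
  · obtain ⟨U, hU, M, hM⟩ := h 0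
    have hbdd : ∃ M, ∀ᶠ t in 𝓝 0, -M ≤ S t :=
      ⟨M, mem_of_superset hU fun t ht => neg_le_of_abs_le (hM t ht)⟩
    exact_mod_cast le_liminf_coe_of_forall_lt_eventually_lt fun c hc =>
      eventually_nhdsWithin_of_eventually_nhds
        (by simpa using eventually_neg_lt_of_subadditive hsub hbdd (neg_pos.2 hc))
end

section
/- Proposition 8 (Automatic right-continuity): If S : ℝ → ℝ is subadditive, satisfies limsup_{u↓0} S(u) ≤ 0, and S(0) = 0, then S(0+) = 0, i.e. S(v) → 0 as v → 0 through positive values. -/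
/-!
Subadditivity forbids dips near `0+`: if `S v ≤ -ε` at points `v` arbitrarily close to `0` from
the right, then splitting `t = v + (t - v)` repeatedly gives `S t ≤ c - n ε` for every `n`, where
`c` bounds `S` above near `0+`. So `S` is eventually above `-ε`, and together with the limsup
bound this squeezes `S (0+)` to `0`.
-/

open Filter Topology Set

lemma eventually_lt_of_limsup_coe_le_zero {α : Type*} {l : Filter α} {f : α → ℝ}
    (hf : limsup (fun x => (f x : EReal)) l ≤ 0) {ε : ℝ} (hε : 0 < ε) :
    ∀ᶠ x in l, f x < ε := by
  have hlt : limsup (fun x => (f x : EReal)) l < (ε : EReal) :=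
    hf.trans_lt (by exact_mod_cast hε)
  filter_upwards [eventually_lt_of_limsup_lt hlt] with x hx
  exact_mod_cast hx

lemma le_sub_mul_of_forall_exists_le_neg {S : ℝ → ℝ}
    (hsub : ∀ u v : ℝ, S (u + v) ≤ S u + S v) {δ c ε : ℝ} (hbound : ∀ t ∈ Ioo 0 δ, S t ≤ c)
    (hdip : ∀ t ∈ Ioo 0 δ, ∃ v ∈ Ioo 0 t, S v ≤ -ε) (n : ℕ) :
    ∀ t ∈ Ioo 0 δ, S t ≤ c - n * ε := by
  induction n with
  | zero => simpa using hbound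
  | succ n ih =>
    intro t ht
    obtain ⟨v, hv, hSv⟩ := hdip t ht
    have hsplit : S t ≤ S v + S (t - v) := by simpa using hsub v (t - v)
    have hrest := ih (t - v) ⟨by linarith [hv.2], by linarith [ht.2, hv.1]⟩
    push_cast
    linarith

lemma eventually_neg_lt_of_eventually_le {S : ℝ → ℝ}
    (hsub : ∀ u v : ℝ, S (u + v) ≤ S u + S v) {c : ℝ} (hc : ∀ᶠ v in 𝓝[>] (0 : ℝ), S v ≤ c)
    {ε : ℝ} (hε : 0 < ε) : ∀ᶠ v in 𝓝[>] (0 : ℝ), -ε < S v := by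
  by_contra hcon
  have hdip : ∃ᶠ v in 𝓝[>] (0 : ℝ), S v ≤ -ε := by
    simpa only [not_eventually, not_lt] using hcon
  obtain ⟨δ, hδ, hbound⟩ := (nhdsGT_basis (0 : ℝ)).eventually_iff.mp hc
  have hdrop := le_sub_mul_of_forall_exists_le_neg hsub hbound
    ((nhdsGT_basis (0 : ℝ)).frequently_iff.mp hdip · ·.1)
  obtain ⟨n, hn⟩ := exists_nat_gt ((c - S (δ / 2)) / ε)
  have hSt := hdrop n (δ / 2) ⟨half_pos hδ, half_lt_self hδ⟩
  have hnε := (div_lt_iff₀ hε).mp hn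
  linarith

theorem prop8_general (S : ℝ → ℝ)
    (hsub : ∀ u v : ℝ, S (u + v) ≤ S u + S v)
    (hlimsup : limsup (fun u => (S u : EReal)) (𝓝[>] (0 : ℝ)) ≤ 0) :
    Tendsto S (𝓝[>] (0 : ℝ)) (𝓝 0) := by
  have hupper := fun ε (hε : (0 : ℝ) < ε) => eventually_lt_of_limsup_coe_le_zero hlimsup hε
  have hbounded : ∀ᶠ v in 𝓝[>] (0 : ℝ), S v ≤ 1 :=
    (hupper 1 one_pos).mono fun _ hv => hv.le
  refine tendsto_order.2 ⟨fun a ha => ?_, hupper⟩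
  simpa using eventually_neg_lt_of_eventually_le hsub hbounded (neg_pos.2 ha)

/-- Proposition 8 (Automatic right-continuity): a subadditive `S : ℝ → ℝ` with
`limsup_{u↓0} S(u) ≤ 0` and `S(0) = 0` satisfies `S(0+) = 0`. -/
theorem prop8 (S : ℝ → ℝ)
    (hsub : ∀ u v : ℝ, S (u + v) ≤ S u + S v)
    (hlimsup : limsup (fun u => (S u : EReal)) (𝓝[>] (0 : ℝ)) ≤ 0)
    (h0 : S 0 = 0) :
    Tendsto S (𝓝[>] (0 : ℝ)) (𝓝 0) :=
  prop8_general S hsub hlimsup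
end

section
/- Proposition 9(i) (measure case): Let S : ℝ → ℝ be subadditive and suppose there exist M ∈ ℝ and a sequence of Lebesgue-measurable sets P_n ⊆ (0, 1/n) of positive Lebesgue measure such that limsup_{n→∞} sup{S(x) : x ∈ P_n} ≤ M. Then S is WNT: for every convergent real sequence (u_n) there exist t ∈ ℝ, an infinite set 𝕄 ⊆ ℕ and k ∈ ℕ such that |S(t + u_m)| < k for all m ∈ 𝕄. -/
/-!
On a set `A = P n` of positive finite measure, chosen so that `S < M + 1` on `A`, the
translates of `A` move continuously in measure. Hence for a null sequence `z` some `x ∈ A`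
has `x + z n ∈ A` infinitely often, and a second such point `y` can be found with also
`y - z n ∈ A` for infinitely many of these `n`. Subadditivity turns the upper bound on
`S (y - z n)` into a lower bound on `S (x + z n)`, because `(x + z n) + (y - z n) = x + y` is
fixed; so `S` is bounded on `x + z n` along these `n`.
-/

open Filter Topology

/-- `S` is WNT: for each convergent real sequence `(u_n)` there are `t ∈ ℝ`, an infinite
`𝕄 ⊆ ℕ` and `k ∈ ℕ` with `|S(t + u_m)| < k` for all `m ∈ 𝕄`. -/
def WNT (S : ℝ → ℝ) : Prop :=
  ∀ (u : ℕ → ℝ) (l : ℝ), Tendsto u atTop (𝓝 l) →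
    ∃ (t : ℝ) (M : Set ℕ) (k : ℕ), M.Infinite ∧ ∀ m ∈ M, |S (t + u m)| < k

open MeasureTheory
open scoped ENNReal symmDiff

section Translation

variable {G : Type*} [AddGroup G] [TopologicalSpace G] [IsTopologicalAddGroup G]
  [MeasurableSpace G] [BorelSpace G] (μ : Measure G) [μ.IsAddRightInvariant]
  [μ.InnerRegularCompactLTTop] [IsLocallyFiniteMeasure μ]

theorem tendsto_measure_preimage_add_right_symmDiff_nhds_zero {s : Set G}
    (hs : NullMeasurableSet s μ) (hμs : μ s ≠ ∞) :
    Tendsto (fun t => μ (((· + t) ⁻¹' s) ∆ s)) (𝓝 0) (𝓝 0) := by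
  let f : C(G × G, G) := ⟨fun p => p.2 + p.1, by fun_prop⟩
  have hf (t : G) : ⇑(f.curry t) = (· + t) := rfl
  simpa [hf] using tendsto_measure_symmDiff_preimage_nhds_zero (f.curry.continuous.tendsto 0)
    (.of_forall (measurePreserving_add_right μ)) (measurePreserving_add_right μ 0) hs hμs

theorem exists_mem_frequently_add_mem {A : Set G} (hA : NullMeasurableSet A μ)
    (h0 : μ A ≠ 0) (hfin : μ A ≠ ∞) {z : ℕ → G} (hz : Tendsto z atTop (𝓝 0))
    {p : ℕ → Prop} (hp : ∃ᶠ n in atTop, p n) :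
    ∃ x ∈ A, ∃ᶠ n in atTop, p n ∧ x + z n ∈ A := by
  obtain ⟨ε, hε0, hεA⟩ := ENNReal.exists_pos_sum_of_countable' h0 ℕ
  have hsmall (j : ℕ) : ∀ᶠ n in atTop, μ (A \ (· + z n) ⁻¹' A) < ε j := by
    refine ((tendsto_measure_preimage_add_right_symmDiff_nhds_zero μ hA hfin).comp hz).eventually
      (gt_mem_nhds (hε0 j)) |>.mono fun n hn => (measure_mono ?_).trans_lt hn
    rw [symmDiff_comm]
    exact le_sup_left
  choose n hnj hpn hn using fun j => frequently_atTop.1 (hp.and_eventually (hsmall j)) j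
  have hcover : μ (⋃ j, A \ (· + z (n j)) ⁻¹' A) < μ A :=
    (measure_iUnion_le _).trans_lt
      ((ENNReal.tsum_le_tsum fun j => (hn j).le).trans_lt hεA)
  obtain ⟨x, hxA, hx⟩ := Set.sdiff_nonempty.2 fun h => (measure_mono h).not_gt hcover
  refine ⟨x, hxA, frequently_atTop.2 fun j => ⟨n j, hnj j, hpn j, ?_⟩⟩
  by_contra h
  exact hx (Set.mem_iUnion.2 ⟨j, hxA, h⟩)

end Translation

theorem abs_le_of_subadditive {G : Type*} [AddGroup G] {S : G → ℝ}
    (hsub : ∀ u v, S (u + v) ≤ S u + S v) {C : ℝ} {w v : G} (hw : S w ≤ C)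
    (hv : S v ≤ C) :
    |S w| ≤ C + |S (-(w + v))| := by
  have hS0 : 0 ≤ S 0 := by simpa using hsub 0 0
  have hw' : S 0 ≤ S w + S (-w) := by simpa using hsub w (-w)
  have hv' : S (-w) ≤ S v + S (-(w + v)) := by
    simpa [neg_add_rev, add_assoc] using hsub v (-(w + v))
  rw [abs_le]
  constructor <;> linarith [le_abs_self (S (-(w + v))), abs_nonneg (S (-(w + v)))]

theorem eventually_forall_lt_of_limsup_sSup_le {α : Type*} {f : α → ℝ} {P : ℕ → Set α}
    {M M' : ℝ} (h : limsup (fun n => sSup ((fun x => (f x : EReal)) '' P n)) atTop ≤ M)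
    (hM : M < M') : ∀ᶠ n in atTop, ∀ x ∈ P n, f x < M' := by
  filter_upwards [eventually_lt_of_limsup_lt (h.trans_lt (EReal.coe_lt_coe_iff.2 hM))]
    with n hn x hx
  exact EReal.coe_lt_coe_iff.1 ((le_sSup (Set.mem_image_of_mem _ hx)).trans_lt hn)

/-- Proposition 9(i), measure case: a subadditive `S` satisfying the `(L)-limsup_M`
condition on a sequence of positive-measure sets `P_n ⊆ (0, 1/n)` is WNT. -/
theorem prop9i (S : ℝ → ℝ) (hsub : ∀ u v : ℝ, S (u + v) ≤ S u + S v)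
    (M : ℝ) (P : ℕ → Set ℝ)
    (hP : ∀ n : ℕ, P n ⊆ Set.Ioo (0 : ℝ) (1 / ((n : ℝ) + 1)))
    (hmeas : ∀ n, MeasurableSet (P n))
    (hpos : ∀ n, 0 < MeasureTheory.volume (P n))
    (hlim : limsup (fun n => sSup ((fun x => (S x : EReal)) '' P n)) atTop ≤ (M : EReal)) :
    WNT S := by
  intro u l hu
  obtain ⟨n₀, hSA⟩ := (eventually_forall_lt_of_limsup_sSup_le hlim (lt_add_one M)).exists
  set A := P n₀
  have hA := (hmeas n₀).nullMeasurableSet (μ := volume)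
  have hfin : volume A ≠ ∞ := ((measure_mono (hP n₀)).trans_lt measure_Ioo_lt_top).ne
  have hz : Tendsto (fun m => u m - l) atTop (𝓝 0) := by simpa using hu.sub_const l
  obtain ⟨x, -, hx⟩ := exists_mem_frequently_add_mem volume hA (hpos n₀).ne' hfin hz
    (.of_forall (p := fun _ => True) fun _ => trivial)
  obtain ⟨y, -, hxy⟩ := exists_mem_frequently_add_mem volume hA (hpos n₀).ne' hfin
    (z := fun m => l - u m) (by simpa using hu.const_sub l) hx
  set B := M + 1 + |S (-(x + y))|
  refine ⟨x - l, {m | x + (u m - l) ∈ A ∧ y + (l - u m) ∈ A}, ⌊B⌋₊ + 1,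
    Nat.frequently_atTop_iff_infinite.1 (hxy.mono fun m hm => ⟨hm.1.2, hm.2⟩), ?_⟩
  rintro m ⟨hxm, hym⟩
  have hsum : x + (u m - l) + (y + (l - u m)) = x + y := by ring
  have hSx := abs_le_of_subadditive hsub (hSA _ hxm).le (hSA _ hym).le
  rw [hsum] at hSx
  calc |S (x - l + u m)| = |S (x + (u m - l))| := by congr 2; ring
    _ ≤ B := hSx
    _ < (⌊B⌋₊ + 1 : ℕ) := by exact_mod_cast Nat.lt_floor_add_one B
end

section
/- Proposition 7′: If S : ℝ → ℝ is subadditive and WNT, then S is locally bounded above: every point of ℝ has a neighbourhood on which S is bounded above. -/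
/-!
If `S` were unbounded above near `x`, there would be `y n → x` with `S (y n) → ∞`. Subadditivity
gives `S (y n) ≤ S (-t) + S (t + y n)`, so every translate `S (t + y n)` also tends to `∞`, and
`|S (t + y m)| < k` can hold for only finitely many `m`, contradicting WNT.
-/

open Filter Topology

lemma exists_seq_tendsto_nhds_of_not_isBoundedUnder {X : Type*} [TopologicalSpace X]
    [FirstCountableTopology X] {f : X → ℝ} {x : X} (hf : ¬IsBoundedUnder (· ≤ ·) (𝓝 x) f) :
    ∃ y : ℕ → X, Tendsto y atTop (𝓝 x) ∧ Tendsto (f ∘ y) atTop atTop := by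
  have : (𝓝 x ⊓ comap f atTop).NeBot := by
    refine ((𝓝 x).basis_sets.inf (atTop_basis.comap f)).neBot_iff.2 fun {i} hi => ?_
    by_contra hempty
    refine hf ⟨i.2, eventually_map.2 (eventually_of_mem hi.1 fun z hz => ?_)⟩
    exact not_lt.1 fun hlt => hempty ⟨z, hz, hlt.le⟩
  obtain ⟨y, hy⟩ := exists_seq_tendsto (𝓝 x ⊓ comap f atTop)
  rw [tendsto_inf, tendsto_comap_iff] at hy
  exact ⟨y, hy⟩

lemma le_add_of_subadditive {G : Type*} [AddGroup G] {S : G → ℝ}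
    (hsub : ∀ u v, S (u + v) ≤ S u + S v) (t y : G) : S y ≤ S (-t) + S (t + y) := by
  simpa only [neg_add_cancel_left] using hsub (-t) (t + y)

lemma finite_setOf_lt_of_subadditive {G : Type*} [AddGroup G] {S : G → ℝ}
    (hsub : ∀ u v, S (u + v) ≤ S u + S v) {y : ℕ → G} (hy : Tendsto (S ∘ y) atTop atTop)
    (t : G) (k : ℝ) : {m | S (t + y m) < k}.Finite := by
  have htrans : Tendsto (fun m => S (t + y m)) atTop atTop :=
    tendsto_atTop_mono (fun m => by
        simp only [Function.comp_apply]; linarith [le_add_of_subadditive hsub t (y m)])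
      (tendsto_atTop_add_const_left atTop (-S (-t)) hy)
  have hev : ∀ᶠ m in cofinite, k ≤ S (t + y m) := by
    rw [Nat.cofinite_eq_atTop]
    exact htrans.eventually_ge_atTop k
  simpa only [not_le] using eventually_cofinite.1 hev

/-- Proposition 7′: a subadditive WNT function is locally bounded above. -/
theorem prop7' (S : ℝ → ℝ) (hsub : ∀ u v : ℝ, S (u + v) ≤ S u + S v)
    (hwnt : WNT S) :
    ∀ x : ℝ, ∃ U ∈ 𝓝 x, ∃ M : ℝ, ∀ y ∈ U, S y ≤ M := by
  intro x
  by_contra hunbdd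
  obtain ⟨y, hyx, hSy⟩ := exists_seq_tendsto_nhds_of_not_isBoundedUnder (f := S) (x := x)
    fun ⟨M, hM⟩ => hunbdd ⟨_, hM, M, fun _ hz => hz⟩
  obtain ⟨t, M, k, hMinf, hk⟩ := hwnt y x hyx
  exact hMinf ((finite_setOf_lt_of_subadditive hsub hSy t k).subset
    fun m hm => (abs_lt.1 (hk m hm)).2)
end

section
/- Proposition 8′: Let S : ℝ → ℝ be subadditive with S(0) = 0, and suppose there is a sequence of symmetric shift-compact sets Q_n ⊆ (−1/n, 1/n) with limsup_{n→∞} sup{S(x) : x ∈ Q_n} ≤ 0. Then S(0+) = 0, i.e. S(v) → S(0) = 0 as v → 0 through positive values. -/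
/-!
A bound `S ≤ ε` on a symmetric shift-compact set `Q` propagates to a neighbourhood of `0`:
if `S (z m) > 2ε` along a null sequence, shift-compactness applied to that sequence gives
`t ∈ Q` and `m` with `t + z m ∈ Q`, and then `S (z m) ≤ S (t + z m) + S (-t) ≤ 2ε`.
Applied to `x` and `-x`, together with `0 = S 0 ≤ S x + S (-x)`, this squeezes `S x` to `0`.
-/

open Filter Topology

/-- `Q` is shift-compact: for each null sequence `(z_n)` there are `t ∈ Q` and an infinite
`𝕄 ⊆ ℕ` with `t + z_m ∈ Q` for all `m ∈ 𝕄`. -/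
def ShiftCompact (Q : Set ℝ) : Prop :=
  ∀ z : ℕ → ℝ, Tendsto z atTop (𝓝 0) →
    ∃ t ∈ Q, ∃ M : Set ℕ, M.Infinite ∧ ∀ m ∈ M, t + z m ∈ Q

lemma ShiftCompact.eventually_le_two_mul {S : ℝ → ℝ} (hsub : ∀ u v, S (u + v) ≤ S u + S v)
    {Q : Set ℝ} (hsym : -Q = Q) (hsc : ShiftCompact Q) {ε : ℝ} (hε : ∀ x ∈ Q, S x ≤ ε) :
    ∀ᶠ x in 𝓝 0, S x ≤ 2 * ε := by
  rw [eventually_iff_seq_eventually]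
  intro z hz
  by_contra h
  obtain ⟨φ, hφ, hbig⟩ := extraction_of_frequently_atTop (not_eventually.mp h)
  obtain ⟨t, ht, M, hM, hshift⟩ := hsc _ (hz.comp hφ.tendsto_atTop)
  obtain ⟨m, hm⟩ := hM.nonempty
  have hshifted : t + z (φ m) ∈ Q := hshift m hm
  have hneg : -t ∈ Q := hsym ▸ Set.neg_mem_neg.mpr ht
  have : S (z (φ m)) ≤ S (t + z (φ m)) + S (-t) := by
    simpa using hsub (t + z (φ m)) (-t)
  linarith [not_le.mp (hbig m), hε _ hshifted, hε _ hneg]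

lemma tendsto_nhds_zero_of_subadditive {G : Type*} [AddGroup G] [TopologicalSpace G]
    [ContinuousNeg G] {S : G → ℝ} (hsub : ∀ u v, S (u + v) ≤ S u + S v) (h0 : S 0 = 0)
    (hbound : ∀ ε > 0, ∀ᶠ x in 𝓝 0, S x ≤ ε) :
    Tendsto S (𝓝 0) (𝓝 0) := by
  have hneg : Tendsto Neg.neg (𝓝 (0 : G)) (𝓝 0) := by
    simpa using (continuous_neg (G := G)).tendsto 0
  refine tendsto_order.2 ⟨fun a ha => ?_, fun a ha => ?_⟩
  · filter_upwards [hneg.eventually (hbound (-a / 2) (by linarith))] with x hx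
    have : S 0 ≤ S x + S (-x) := by simpa using hsub x (-x)
    linarith
  · filter_upwards [hbound (a / 2) (by linarith)] with x hx
    linarith

lemma eventually_forall_lt_of_limsup_sSup_image_le_zero {ι α : Type*} {l : Filter ι}
    {f : α → ℝ} {s : ι → Set α}
    (hlim : limsup (fun i => sSup ((fun x => (f x : EReal)) '' s i)) l ≤ 0) {ε : ℝ}
    (hε : 0 < ε) : ∀ᶠ i in l, ∀ x ∈ s i, f x < ε := by
  filter_upwards [eventually_lt_of_limsup_lt (hlim.trans_lt (EReal.coe_pos.mpr hε))]
    with i hi x hx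
  exact EReal.coe_lt_coe_iff.mp ((le_sSup (Set.mem_image_of_mem _ hx)).trans_lt hi)

theorem prop8'_general (S : ℝ → ℝ)
    (hsub : ∀ u v : ℝ, S (u + v) ≤ S u + S v)
    (h0 : S 0 = 0) (Q : ℕ → Set ℝ)
    (hsym : ∀ n, -Q n = Q n)
    (hsc : ∀ n, ShiftCompact (Q n))
    (hlim : limsup (fun n => sSup ((fun x => (S x : EReal)) '' Q n)) atTop ≤ 0) :
    Tendsto S (𝓝[>] (0 : ℝ)) (𝓝 0) := by
  refine (tendsto_nhds_zero_of_subadditive hsub h0 fun ε hε => ?_).mono_left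
    nhdsWithin_le_nhds
  obtain ⟨n, hn⟩ := (eventually_forall_lt_of_limsup_sSup_image_le_zero hlim
    (half_pos hε)).exists
  filter_upwards [(hsc n).eventually_le_two_mul hsub (hsym n) fun x hx => (hn x hx).le]
    with x hx
  linarith

/-- Proposition 8′: a subadditive `S` with `S(0) = 0` satisfying the `(SS)-limsup_0`
condition on symmetric shift-compact sets `Q_n ⊆ (−1/n, 1/n)` has `S(0+) = 0`. -/
theorem prop8' (S : ℝ → ℝ)
    (hsub : ∀ u v : ℝ, S (u + v) ≤ S u + S v)
    (h0 : S 0 = 0) (Q : ℕ → Set ℝ)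
    (hQ : ∀ n : ℕ, Q n ⊆ Set.Ioo (-(1 / ((n : ℝ) + 1))) (1 / ((n : ℝ) + 1)))
    (hsym : ∀ n, -Q n = Q n)
    (hsc : ∀ n, ShiftCompact (Q n))
    (hlim : limsup (fun n => sSup ((fun x => (S x : EReal)) '' Q n)) atTop ≤ 0) :
    Tendsto S (𝓝[>] (0 : ℝ)) (𝓝 0) :=
  prop8'_general S hsub h0 Q hsym hsc hlim
end

section
/- Theorem 1′ (Strong quantifier weakening): Let S : ℝ → ℝ ∪ {±∞} be subadditive and let 𝔸 ⊆ ℝ be an additive subgroup such that (i) 𝔸 is dense in ℝ; (ii) S restricted to 𝔸 is finite (real-valued) and additive; (iii) S is WNT* on 𝔸. Then 𝔸 = ℝ and S is linear: there exists c ∈ ℝ such that S(u) = cu for all u ∈ ℝ. -/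
/-!
WNT* applied to the constant sequence `x` gives `t, t + x ∈ A`, so `A = ℝ`; hence `S` is a
real-valued additive function `F`, and `δ x := F x - F 1 * x` is additive and vanishes on `ℚ`.
Choosing rationals `q n` with `n x - q n → 0`, WNT* yields `t` with `F (t + n x - q n)` bounded
along infinitely many `n`; but this equals `F t + F 1 * (n x - q n) + n δ x`, so `δ x = 0`.
-/

open Filter Topology

/-- `S` is WNT* on `Σ`: for each convergent real sequence `(u_n)` there are `t ∈ Σ`, an
infinite `𝕄 ⊆ ℕ` and `k ∈ ℕ` such that `t + u_m ∈ Σ` and `|S(t + u_m)| < k` for `m ∈ 𝕄`. -/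
def WNTstar (S : ℝ → EReal) (Sig : Set ℝ) : Prop :=
  ∀ (u : ℕ → ℝ) (l : ℝ), Tendsto u atTop (𝓝 l) →
    ∃ t ∈ Sig, ∃ (M : Set ℕ) (k : ℕ), M.Infinite ∧
      ∀ m ∈ M, t + u m ∈ Sig ∧
        -((k : ℝ) : EReal) < S (t + u m) ∧ S (t + u m) < ((k : ℝ) : EReal)

theorem WNTstar.mem {S : ℝ → EReal} {A : AddSubgroup ℝ} (h : WNTstar S A) (x : ℝ) :
    x ∈ A := by
  obtain ⟨t, ht, M, _, hM, hmem⟩ := h (fun _ => x) x tendsto_const_nhds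
  obtain ⟨m, hm⟩ := hM.nonempty
  simpa using A.sub_mem (hmem m hm).1 ht

theorem WNTstar.exists_abs_lt {S : ℝ → EReal} {Sig : Set ℝ} {f : ℝ → ℝ} (h : WNTstar S Sig)
    (hf : ∀ x, S x = f x) {u : ℕ → ℝ} {l : ℝ} (hu : Tendsto u atTop (𝓝 l)) :
    ∃ (t : ℝ) (M : Set ℕ) (k : ℝ), M.Infinite ∧ ∀ m ∈ M, |f (t + u m)| < k := by
  obtain ⟨t, -, M, k, hM, hk⟩ := h u l hu
  refine ⟨t, M, k, hM, fun m hm => ?_⟩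
  obtain ⟨-, hlow, hup⟩ := hk m hm
  rw [hf] at hlow hup
  exact abs_lt.2 ⟨by exact_mod_cast hlow, by exact_mod_cast hup⟩

theorem exists_tendsto_natCast_mul_sub_ratCast (x : ℝ) :
    ∃ q : ℕ → ℚ, Tendsto (fun n : ℕ => n * x - q n) atTop (𝓝 0) := by
  have hq : ∀ n : ℕ, ∃ q : ℚ, n * x - 1 / (n + 1) < q ∧ (q : ℝ) < n * x := fun n =>
    exists_rat_btwn (sub_lt_self _ Nat.one_div_pos_of_nat)
  choose q hq₁ hq₂ using hq
  exact ⟨q, squeeze_zero (fun n => (sub_pos.2 (hq₂ n)).le) (fun n => by linarith [hq₁ n])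
    tendsto_one_div_add_atTop_nhds_zero_nat⟩

theorem eq_zero_of_abs_add_natCast_mul_lt {a : ℕ → ℝ} {L d k : ℝ} {M : Set ℕ}
    (ha : Tendsto a atTop (𝓝 L)) (hM : M.Infinite) (h : ∀ m ∈ M, |a m + m * d| < k) :
    d = 0 := by
  obtain ⟨C, hC⟩ := isBounded_iff_forall_norm_le.1 (Metric.isBounded_range_of_tendsto a ha)
  by_contra hd
  have hd' : 0 < |d| := abs_pos.2 hd
  obtain ⟨N, hN⟩ := exists_nat_gt ((C + k) / |d|)
  obtain ⟨m, hmM, hNm⟩ := hM.exists_gt N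
  have hlarge : C + k < m * |d| := by
    rw [div_lt_iff₀ hd'] at hN
    nlinarith [(Nat.cast_lt (α := ℝ)).2 hNm]
  have hsmall : m * |d| ≤ |a m + m * d| + |a m| := by
    calc (m : ℝ) * |d| = |(a m + m * d) - a m| := by
          rw [add_sub_cancel_left, abs_mul, Nat.abs_cast]
      _ ≤ |a m + m * d| + |a m| := abs_sub _ _
  linarith [h m hmM, hC (a m) ⟨m, rfl⟩, Real.norm_eq_abs (a m)]

theorem AddMonoidHom.map_natCast_mul_sub_ratCast (F : ℝ →+ ℝ) (n : ℕ) (q : ℚ) (x : ℝ) :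
    F (n * x - q) = F 1 * (n * x - q) + n * (F x - F 1 * x) := by
  have hq : F q = q * F 1 := by simpa using map_ratCast_smul F ℝ ℝ q 1
  rw [map_sub, hq, ← nsmul_eq_mul, map_nsmul, nsmul_eq_mul]
  ring

theorem AddMonoidHom.eq_mul_of_forall_tendsto_zero_exists_abs_lt (F : ℝ →+ ℝ)
    (hF : ∀ u : ℕ → ℝ, Tendsto u atTop (𝓝 0) →
      ∃ (t : ℝ) (M : Set ℕ) (k : ℝ), M.Infinite ∧ ∀ m ∈ M, |F (t + u m)| < k)
    (x : ℝ) : F x = F 1 * x := by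
  obtain ⟨q, hq⟩ := exists_tendsto_natCast_mul_sub_ratCast x
  obtain ⟨t, M, k, hM, hk⟩ := hF _ hq
  have hδ : F x - F 1 * x = 0 :=
    eq_zero_of_abs_add_natCast_mul_lt ((hq.const_mul (F 1)).const_add (F t)) hM fun m hm => by
      simpa only [map_add, F.map_natCast_mul_sub_ratCast, add_assoc] using hk m hm
  linarith

theorem theorem1'_general (S : ℝ → EReal) (A : AddSubgroup ℝ)
    (hfin : ∀ a ∈ A, ∃ r : ℝ, S a = (r : EReal))
    (hadd : ∀ a ∈ A, ∀ b ∈ A, S (a + b) = S a + S b)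
    (hwnt : WNTstar S (A : Set ℝ)) :
    (A : Set ℝ) = Set.univ ∧ ∃ c : ℝ, ∀ u : ℝ, S u = ((c * u : ℝ) : EReal) := by
  have hA : ∀ x, x ∈ A := hwnt.mem
  choose f hf using fun x => hfin x (hA x)
  let F : ℝ →+ ℝ := AddMonoidHom.mk' f fun u v => by
    have h := hadd u (hA u) v (hA v)
    rw [hf, hf, hf] at h
    exact_mod_cast h
  have hlin := F.eq_mul_of_forall_tendsto_zero_exists_abs_lt fun u hu => hwnt.exists_abs_lt hf hu
  exact ⟨Set.eq_univ_of_forall hA, F 1, fun u => by rw [hf, ← hlin]; rfl⟩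

/-- Theorem 1′ (Strong quantifier weakening): a subadditive extended-real-valued `S`,
finite and additive on a dense additive subgroup `A`, WNT* on `A`, forces `A = ℝ` and
`S` linear. -/
theorem theorem1' (S : ℝ → EReal) (A : AddSubgroup ℝ)
    (hsub : ∀ u v : ℝ, S (u + v) ≤ S u + S v)
    (hdense : Dense (A : Set ℝ))
    (hfin : ∀ a ∈ A, ∃ r : ℝ, S a = (r : EReal))
    (hadd : ∀ a ∈ A, ∀ b ∈ A, S (a + b) = S a + S b)
    (hwnt : WNTstar S (A : Set ℝ)) :
    (A : Set ℝ) = Set.univ ∧ ∃ c : ℝ, ∀ u : ℝ, S u = ((c * u : ℝ) : EReal) :=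
  theorem1'_general S A hfin hadd hwnt
end

section
/- Proposition 11: If T ⊆ ℝ is a symmetric analytic set that spans ℝ as a vector space over ℚ, then there exists k ∈ ℕ such that the k-fold sumset k·T := T + T + ⋯ + T (k summands) contains the open interval (−1, 1). -/
/-!
If `T = -T` spans `ℝ` over `ℚ`, every real number has a positive integer multiple in some
iterated sumset `k • T`, so `ℝ` is a countable union of rescaled copies of the sets `k • T` and
one of them has positive outer measure. Being analytic, that set contains a compact set `K` of
positive measure: write it as the continuous image of the Baire space `ℕ → ℕ` and bound the
coordinates one at a time, keeping the outer measure of the image large, until the bounds cut out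
a compact subset. By Steinhaus' theorem `K - K ⊆ (k + k) • T` is a neighbourhood of `0`, and
finitely many more summands cover `(-1, 1)`.
-/

open MeasureTheory Set Filter Topology ENNReal

def prefixBox (g : ℕ → ℕ) (k : ℕ) : Set (ℕ → ℕ) := {x | ∀ i < k, x i ≤ g i}

lemma prefixBox_congr {g g' : ℕ → ℕ} {k : ℕ} (h : ∀ i < k, g i = g' i) :
    prefixBox g k = prefixBox g' k :=
  Set.ext fun x => forall₂_congr fun i hi => by rw [h i hi]

lemma prefixBox_update_succ (g : ℕ → ℕ) (k a : ℕ) :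
    prefixBox (Function.update g k a) (k + 1) = prefixBox g k ∩ {x | x k ≤ a} := by
  ext x
  simp only [prefixBox, mem_inter_iff, mem_ofPred_eq, Nat.lt_succ_iff_lt_or_eq, or_imp, forall_and,
    forall_eq]
  refine and_congr (forall₂_congr fun i hi => ?_) (by rw [Function.update_self])
  rw [Function.update_of_ne hi.ne]

lemma exists_prefixBox_subset_of_pi_subset {g : ℕ → ℕ} {W : Set (ℕ → ℕ)} (hW : IsOpen W)
    (h : univ.pi (fun i => Iic (g i)) ⊆ W) : ∃ k, prefixBox g k ⊆ W := by
  by_contra! hnot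
  choose x hx_box hx_W using fun k => not_subset.1 (hnot k)
  have hy : ∀ k, (fun i => min (x k i) (g i)) ∈ univ.pi (fun i => Iic (g i)) :=
    fun k i _ => mem_Iic.2 (min_le_right _ _)
  obtain ⟨z, hz, φ, hφ, hyz⟩ :=
    (isCompact_univ_pi fun i => (finite_Iic (g i)).isCompact).tendsto_subseq hy
  -- Along the subsequence, `x (φ n)` eventually agrees with its truncation in every coordinate.
  have hxz : Tendsto (x ∘ φ) atTop (𝓝 z) := by
    refine tendsto_pi_nhds.2 fun i => (tendsto_pi_nhds.1 hyz i).congr' ?_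
    filter_upwards [eventually_gt_atTop i] with n hn
    exact min_eq_left (hx_box (φ n) i (hn.trans_le (hφ.id_le n)))
  obtain ⟨n, hn⟩ := (hxz.eventually (hW.mem_nhds (h hz))).exists
  exact hx_W (φ n) hn

section Capacity

variable {α : Type*} [MeasurableSpace α] {μ : Measure α}

lemma exists_lt_measure_image_prefixBox_succ {f : (ℕ → ℕ) → α} {c : ℝ≥0∞} {g : ℕ → ℕ} {k : ℕ}
    (h : c < μ (f '' prefixBox g k)) :
    ∃ a, c < μ (f '' prefixBox (Function.update g k a) (k + 1)) := by
  have hmono : Monotone fun a : ℕ => f '' (prefixBox g k ∩ {x | x k ≤ a}) :=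
    fun a b hab => image_mono (inter_subset_inter_right _ fun x hx => le_trans hx hab)
  have hunion : ⋃ a : ℕ, f '' (prefixBox g k ∩ {x | x k ≤ a}) = f '' prefixBox g k := by
    rw [← image_iUnion, ← inter_iUnion, iUnion_eq_univ_iff.2 fun x => ⟨x k, le_refl (x k)⟩,
      inter_univ]
  rw [← hunion, hmono.measure_iUnion, lt_iSup_iff] at h
  simpa only [prefixBox_update_succ] using h

lemma exists_forall_lt_measure_image_prefixBox {f : (ℕ → ℕ) → α} {c : ℝ≥0∞}
    (hc : c < μ (range f)) : ∃ g : ℕ → ℕ, ∀ k, c < μ (f '' prefixBox g k) := by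
  choose! next hnext using fun (k : ℕ) (g : ℕ → ℕ) =>
    exists_lt_measure_image_prefixBox_succ (μ := μ) (f := f) (c := c) (g := g) (k := k)
  let G : ℕ → ℕ → ℕ := fun k =>
    Nat.rec (motive := fun _ => ℕ → ℕ) 0 (fun k G => Function.update G k (next k G)) k
  have hG : ∀ k, c < μ (f '' prefixBox (G k) k) := by
    intro k
    induction k with
    | zero => simpa [prefixBox, image_univ] using hc
    | succ k ih => exact hnext k (G k) ih
  have hG_stable : ∀ k, ∀ i < k, G k i = G (i + 1) i := by
    intro k
    induction k with
    | zero => exact fun i hi => absurd hi (Nat.not_lt_zero i)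
    | succ k ih =>
      intro i hi
      rcases Nat.lt_succ_iff_lt_or_eq.1 hi with hi | rfl
      · exact (Function.update_of_ne hi.ne _ _).trans (ih i hi)
      · rfl
  exact ⟨fun i => G (i + 1) i, fun k => prefixBox_congr (hG_stable k) ▸ hG k⟩

/-- A form of Choquet's capacitability theorem. -/
theorem MeasureTheory.AnalyticSet.exists_lt_isCompact [TopologicalSpace α] [μ.OuterRegular]
    {A : Set α} (hA : AnalyticSet A) {r : ℝ≥0∞} (hr : r < μ A) : ∃ K ⊆ A, IsCompact K ∧ r < μ K := by
  obtain ⟨c, hrc, hcA⟩ := exists_between hr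
  rw [AnalyticSet] at hA
  rcases hA with rfl | ⟨f, hf, rfl⟩
  · simp at hr
  obtain ⟨g, hg⟩ := exists_forall_lt_measure_image_prefixBox hcA
  have hK : IsCompact (univ.pi fun i => Iic (g i)) :=
    isCompact_univ_pi fun i => (finite_Iic (g i)).isCompact
  refine ⟨f '' univ.pi fun i => Iic (g i), image_subset_range _ _, hK.image hf,
    hrc.trans_le (not_lt.1 fun hlt => ?_)⟩
  obtain ⟨U, hKU, hU, hUc⟩ := exists_isOpen_lt_of_lt _ _ hlt
  obtain ⟨k, hk⟩ := exists_prefixBox_subset_of_pi_subset (hU.preimage hf) (image_subset_iff.1 hKU)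
  exact (hg k).not_gt ((measure_mono (image_subset_iff.2 hk)).trans_lt hUc)

end Capacity

section

open Pointwise

namespace MeasureTheory.AnalyticSet

variable {α β : Type*} [TopologicalSpace α] [TopologicalSpace β]

protected lemma prod {s : Set α} {t : Set β} (hs : AnalyticSet s) (ht : AnalyticSet t) :
    AnalyticSet (s ×ˢ t) := by
  obtain ⟨γ, _, _, f, hf, rfl⟩ := analyticSet_iff_exists_polishSpace_range.1 hs
  obtain ⟨δ, _, _, g, hg, rfl⟩ := analyticSet_iff_exists_polishSpace_range.1 ht
  rw [← range_prodMap]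
  exact analyticSet_range_of_polishSpace (hf.prodMap hg)

protected lemma add [Add α] [ContinuousAdd α] {s t : Set α} (hs : AnalyticSet s)
    (ht : AnalyticSet t) : AnalyticSet (s + t) := by
  rw [← image2_add, ← image_prod]
  exact (hs.prod ht).image_of_continuous continuous_add

protected lemma nsmul [AddMonoid α] [ContinuousAdd α] {s : Set α} (hs : AnalyticSet s) :
    ∀ n : ℕ, AnalyticSet (n • s)
  | 0 => by
    rw [zero_nsmul, ← singleton_zero, ← range_const (ι := Unit)]
    exact analyticSet_range_of_polishSpace continuous_const
  | n + 1 => by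
    rw [succ_nsmul]
    exact (hs.nsmul n).add hs

end MeasureTheory.AnalyticSet

section Sumsets

variable {V : Type*} [AddCommGroup V] {T : Set V}

lemma neg_nsmul_eq_nsmul_of_neg_eq (hT : -T = T) (k : ℕ) : -(k • T) = k • T := by
  rw [← neg_nsmul, hT]

lemma zsmul_mem_natAbs_nsmul (hT : -T = T) {y : V} (hy : y ∈ T) (z : ℤ) :
    z • y ∈ z.natAbs • T := by
  obtain ⟨n, rfl | rfl⟩ := z.eq_nat_or_neg
  · simpa using nsmul_mem_nsmul hy
  · rw [neg_smul, Int.natAbs_neg, Int.natAbs_natCast, natCast_zsmul,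
      ← neg_nsmul_eq_nsmul_of_neg_eq hT]
    exact neg_mem_neg.2 (nsmul_mem_nsmul hy)

lemma exists_nsmul_mem_nsmul_of_mem_span_rat [Module ℚ V] (hT : -T = T) {x : V}
    (hx : x ∈ Submodule.span ℚ T) : ∃ n k : ℕ, 0 < n ∧ n • x ∈ k • T := by
  induction hx using Submodule.span_induction with
  | mem t ht => exact ⟨1, 1, one_pos, by simpa using ht⟩
  | zero => exact ⟨1, 0, one_pos, by simp⟩
  | add a b _ _ ha hb =>
    obtain ⟨n, k, hn, hna⟩ := ha
    obtain ⟨n', k', hn', hnb⟩ := hb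
    refine ⟨n * n', n' * k + n * k', Nat.mul_pos hn hn', ?_⟩
    have hx : (n * n') • (a + b) = n' • (n • a) + n • (n' • b) := by
      rw [smul_add, ← mul_nsmul, ← mul_nsmul, mul_comm n' n]
    have hT : (n' * k + n * k') • T = n' • (k • T) + n • (k' • T) := by
      rw [add_nsmul, mul_comm n', mul_comm n, mul_nsmul, mul_nsmul]
    rw [hx, hT]
    exact add_mem_add (nsmul_mem_nsmul hna) (nsmul_mem_nsmul hnb)
  | smul q a _ ha =>
    obtain ⟨n, k, hn, hna⟩ := ha
    refine ⟨q.den * n, q.num.natAbs * k, Nat.mul_pos q.den_pos hn, ?_⟩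
    have hq : (q.den * n) • (q • a) = q.num • (n • a) := by
      rw [mul_nsmul, ← Nat.cast_smul_eq_nsmul ℚ q.den, smul_smul, Rat.den_mul_eq_num,
        Int.cast_smul_eq_zsmul, smul_comm]
    rw [hq, mul_comm, mul_nsmul]
    exact zsmul_mem_natAbs_nsmul (neg_nsmul_eq_nsmul_of_neg_eq hT k) hna q.num

end Sumsets

section HaarMeasure

variable {E : Type*} [NormedAddCommGroup E] [NormedSpace ℝ E] [FiniteDimensional ℝ E] {T : Set E}

lemma exists_measure_nsmul_ne_zero [MeasurableSpace E] [BorelSpace E] (μ : Measure E)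
    [μ.IsAddHaarMeasure] (h : ∀ x : E, ∃ n k : ℕ, 0 < n ∧ n • x ∈ k • T) :
    ∃ k : ℕ, μ (k • T) ≠ 0 := by
  by_contra! hnull
  have hcover : (univ : Set E) ⊆ ⋃ (n : ℕ) (k : ℕ), (n : ℝ)⁻¹ • (k • T) := fun x _ => by
    obtain ⟨n, k, hn, hx⟩ := h x
    refine mem_iUnion₂.2 ⟨n, k, n • x, hx, ?_⟩
    rw [← Nat.cast_smul_eq_nsmul ℝ]
    exact inv_smul_smul₀ (Nat.cast_ne_zero.2 hn.ne') x
  refine isOpen_univ.measure_ne_zero μ univ_nonempty (measure_mono_null hcover ?_)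
  exact measure_iUnion_null fun n => measure_iUnion_null fun k => by
    rw [Measure.addHaar_smul, hnull, mul_zero]

lemma exists_nsmul_mem_nhds_zero (hT : -T = T) (hanal : AnalyticSet T)
    (h : ∀ x : E, ∃ n k : ℕ, 0 < n ∧ n • x ∈ k • T) : ∃ k : ℕ, k • T ∈ 𝓝 (0 : E) := by
  borelize E
  obtain ⟨k, hk⟩ := exists_measure_nsmul_ne_zero Measure.addHaar h
  obtain ⟨K, hKT, hK, hKpos⟩ := (hanal.nsmul k).exists_lt_isCompact (pos_iff_ne_zero.2 hk)
  refine ⟨k + k, mem_of_superset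
    (Measure.addHaar.sub_mem_nhds_zero_of_addHaar_pos K hK.measurableSet hKpos) ?_⟩
  calc K - K ⊆ k • T - k • T := sub_subset_sub hKT hKT
    _ = (k + k) • T := by rw [sub_eq_add_neg, neg_nsmul_eq_nsmul_of_neg_eq hT, add_nsmul]

end HaarMeasure

lemma exists_ball_subset_nsmul_of_mem_nhds_zero {E : Type*} [NormedAddCommGroup E]
    [NormedSpace ℝ E] {S : Set E} (hS : S ∈ 𝓝 0) : ∃ m : ℕ, Metric.ball 0 1 ⊆ m • S := by
  obtain ⟨ε, hε, hball⟩ := Metric.mem_nhds_iff.1 hS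
  obtain ⟨m, hm⟩ := exists_nat_one_div_lt hε
  refine ⟨m + 1, fun x hx => ?_⟩
  have hm0 : (0 : ℝ) < m + 1 := by positivity
  have hxS : ((m : ℝ) + 1)⁻¹ • x ∈ S := hball <| by
    rw [mem_ball_zero_iff, norm_smul, Real.norm_of_nonneg (inv_nonneg.2 hm0.le), ← div_eq_inv_mul]
    calc ‖x‖ / (m + 1) < 1 / (m + 1) := by gcongr; exact mem_ball_zero_iff.1 hx
      _ < ε := hm
  have hx_eq : (m + 1) • (((m : ℝ) + 1)⁻¹ • x) = x := by
    rw [← Nat.cast_smul_eq_nsmul ℝ, smul_smul, Nat.cast_succ, mul_inv_cancel₀ hm0.ne', one_smul]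
  simpa only [hx_eq] using nsmul_mem_nsmul (n := m + 1) hxS

end

/-- Proposition 11: a symmetric analytic set spanning `ℝ` over `ℚ` has a `k`-fold sumset
containing `(−1, 1)`. -/
theorem prop11 (T : Set ℝ)
    (hsym : -T = T)
    (hanal : MeasureTheory.AnalyticSet T)
    (hspan : Submodule.span ℚ T = ⊤) :
    ∃ k : ℕ, 0 < k ∧ ∀ x ∈ Set.Ioo (-1 : ℝ) 1,
      ∃ f : Fin k → ℝ, (∀ i, f i ∈ T) ∧ (∑ i, f i) = x := by
  open Pointwise in
  have hmult : ∀ x : ℝ, ∃ n k : ℕ, 0 < n ∧ n • x ∈ k • T := fun x =>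
    exists_nsmul_mem_nsmul_of_mem_span_rat hsym (hspan ▸ Submodule.mem_top)
  obtain ⟨k, hk⟩ := exists_nsmul_mem_nhds_zero hsym hanal hmult
  obtain ⟨m, hm⟩ := exists_ball_subset_nsmul_of_mem_nhds_zero hk
  have hIoo : Ioo (-1 : ℝ) 1 ⊆ (k * m) • T := by
    rw [mul_nsmul, ← Real.ball_zero_eq_Ioo]
    exact hm
  refine ⟨k * m, Nat.pos_of_ne_zero fun h0 => ?_, fun x hx => mem_nsmul_iff_sum.1 (hIoo hx)⟩
  have h : (1 / 2 : ℝ) ∈ (k * m) • T := hIoo ⟨by norm_num, by norm_num⟩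
  rw [h0, zero_nsmul] at h
  norm_num at h
end

section
/- Theorem 5 (Baire–Berz Theorem): If S : ℝ → ℝ is Baire-measurable (the preimage of every open set has the Baire property) and sublinear, then there exist c₊, c₋ ∈ ℝ such that S(u) = c₊u for all u ≥ 0 and S(v) = c₋v for all v ≤ 0. -/
/-!
The sublevel sets `{S ≤ n}` cover `ℝ` and have the Baire property, so one of them, `A`, is not
meagre; by the Pettis argument `A + A` contains an open interval, on which subadditivity bounds
`S` by `2n`. Translating and rescaling by `S t = S (n t) / n` gives `limsup_{t → 0} S t ≤ 0`,
and then `S x - S (x - y) ≤ S y ≤ S x + S (y - x)` makes `S` continuous. A continuous function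
that is `ℚ₊`-homogeneous is `ℝ₊`-homogeneous, which is the claim with `c₊ = S 1`,
`c₋ = -S (-1)`.
-/

open Filter Topology Set

open scoped Pointwise

section BaireCategory

variable {G : Type*} [AddGroup G] [TopologicalSpace G] [IsTopologicalAddGroup G] [BaireSpace G]

theorem BaireMeasurableSet.exists_isOpen_subset_add_self {A : Set G}
    (hA : BaireMeasurableSet A) (hA' : ¬ IsMeagre A) :
    ∃ V : Set G, IsOpen V ∧ V.Nonempty ∧ V ⊆ A + A := by
  obtain ⟨U, hU, hAU⟩ := hA.residualEq_isOpen
  have hUne : U.Nonempty := by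
    refine nonempty_iff_ne_empty.2 fun hU₀ => hA' ?_
    exact eventuallyEq_empty.1 (hU₀ ▸ hAU)
  refine ⟨U + U, hU.add_left, hUne.add hUne, ?_⟩
  rintro _ ⟨a, ha, b, hb, rfl⟩
  let h : G ≃ₜ G := (Homeomorph.neg G).trans (Homeomorph.addRight (a + b))
  have hAU' : ∀ᶠ x in residual G, (h x ∈ A) = (h x ∈ U) :=
    (tendsto_residual_of_isOpenMap h.continuous h.isOpenMap).eventually hAU
  have hb' : h a ∈ U := by simpa [h] using hb
  obtain ⟨x, ⟨hx, hhx⟩, hxU, hhxU⟩ := (dense_of_mem_residual (hAU.and hAU')).exists_mem_open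
    (hU.inter (hU.preimage h.continuous)) ⟨a, ha, hb'⟩
  exact ⟨x, (Iff.of_eq hx).2 hxU, h x, (Iff.of_eq hhx).2 hhxU, add_neg_cancel_left x (a + b)⟩

theorem exists_isOpen_forall_le_of_subadditive {S : G → ℝ}
    (hBaire : ∀ U : Set ℝ, IsOpen U → BaireMeasurableSet (S ⁻¹' U))
    (hsub : ∀ u v : G, S (u + v) ≤ S u + S v) :
    ∃ V : Set G, IsOpen V ∧ V.Nonempty ∧ ∃ M : ℝ, ∀ x ∈ V, S x ≤ M := by
  obtain ⟨n, hn⟩ : ∃ n : ℕ, ¬ IsMeagre (S ⁻¹' Iic (n : ℝ)) := by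
    by_contra! h
    refine not_isMeagre_of_isOpen (X := G) isOpen_univ univ_nonempty ?_
    convert isMeagre_iUnion h
    ext x
    simpa using exists_nat_ge (S x)
  have hA : BaireMeasurableSet (S ⁻¹' Iic (n : ℝ)) := by
    simpa [← preimage_compl] using (hBaire _ isOpen_Ioi).compl
  obtain ⟨V, hV, hVne, hVA⟩ := hA.exists_isOpen_subset_add_self hn
  refine ⟨V, hV, hVne, 2 * n, fun x hx => ?_⟩
  obtain ⟨a, ha, b, hb, rfl⟩ := hVA hx
  calc S (a + b) ≤ S a + S b := hsub a b
    _ ≤ 2 * n := by linarith [show S a ≤ n from ha, show S b ≤ n from hb]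

end BaireCategory

structure IsBerzSublinear (S : ℝ → ℝ) : Prop where
  map_add_le : ∀ u v : ℝ, S (u + v) ≤ S u + S v
  map_natCast_mul : ∀ (x : ℝ) (n : ℕ), S (n * x) = n * S x

namespace IsBerzSublinear

variable {S : ℝ → ℝ}

theorem map_zero (hS : IsBerzSublinear S) : S 0 = 0 := by
  simpa using hS.map_natCast_mul 0 0

theorem map_div_mul (hS : IsBerzSublinear S) (m n : ℕ) (x : ℝ) :
    S (m / n * x) = m / n * S x := by
  rcases eq_or_ne n 0 with rfl | hn
  · simp [hS.map_zero]
  have hn' : (n : ℝ) ≠ 0 := Nat.cast_ne_zero.2 hn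
  refine mul_left_cancel₀ hn' ?_
  rw [← hS.map_natCast_mul, ← mul_assoc, mul_div_cancel₀ _ hn', hS.map_natCast_mul,
    ← mul_assoc, mul_div_cancel₀ _ hn']

theorem eventually_nhds_zero_le (hS : IsBerzSublinear S) {V : Set ℝ} {c M : ℝ}
    (hV : IsOpen V) (hc : c ∈ V) (hM : ∀ x ∈ V, S x ≤ M) :
    ∀ᶠ t in 𝓝 0, S t ≤ M + S (-c) := by
  have hcV : ∀ᶠ t in 𝓝 (0 : ℝ), c + t ∈ V :=
    (continuous_const_add c).continuousAt.preimage_mem_nhds (by simpa using hV.mem_nhds hc)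
  filter_upwards [hcV] with t ht
  calc S t = S ((c + t) + -c) := by ring_nf
    _ ≤ S (c + t) + S (-c) := hS.map_add_le _ _
    _ ≤ M + S (-c) := by linarith [hM _ ht]

theorem eventually_nhds_zero_lt (hS : IsBerzSublinear S) {M : ℝ}
    (hM : ∀ᶠ t in 𝓝 0, S t ≤ M) {ε : ℝ} (hε : 0 < ε) :
    ∀ᶠ t in 𝓝 0, S t < ε := by
  have hM₀ : 0 ≤ M := hS.map_zero ▸ hM.self_of_nhds
  obtain ⟨n, hn⟩ := exists_nat_gt (M / ε)
  have hn₀ : (0 : ℝ) < n := (div_nonneg hM₀ hε.le).trans_lt hn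
  have hnM : M < n * ε := (div_lt_iff₀ hε).1 hn
  have hscale : Tendsto (fun t : ℝ => (n : ℝ) * t) (𝓝 0) (𝓝 0) := by
    simpa using (continuous_const_mul (n : ℝ)).tendsto 0
  filter_upwards [hscale.eventually hM] with t ht
  rw [hS.map_natCast_mul] at ht
  exact lt_of_mul_lt_mul_left (ht.trans_lt hnM) hn₀.le

theorem continuous (hS : IsBerzSublinear S) (h₀ : ∀ ε > 0, ∀ᶠ t in 𝓝 0, S t < ε) :
    Continuous S := by
  refine continuous_iff_continuousAt.2 fun x => tendsto_order.2 ⟨fun a ha => ?_, fun a ha => ?_⟩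
  · have hsub : Tendsto (fun y => x - y) (𝓝 x) (𝓝 0) :=
      (continuous_sub_left x).tendsto' x 0 (sub_self x)
    filter_upwards [hsub.eventually (h₀ _ (sub_pos.2 ha))] with y hy
    have := hS.map_add_le y (x - y)
    rw [add_sub_cancel] at this
    linarith
  · have hsub : Tendsto (fun y => y - x) (𝓝 x) (𝓝 0) := tendsto_sub_nhds_zero_iff.2 tendsto_id
    filter_upwards [hsub.eventually (h₀ _ (sub_pos.2 ha))] with y hy
    have := hS.map_add_le x (y - x)
    rw [add_sub_cancel] at this
    linarith

theorem map_mul_of_nonneg (hS : IsBerzSublinear S) (hc : Continuous S) (x : ℝ) {u : ℝ}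
    (hu : 0 ≤ u) : S (u * x) = u * S x := by
  have habs : ∀ t : ℝ, S (|t| * x) = |t| * S x := fun t =>
    Rat.denseRange_cast.induction_on t
      (isClosed_eq (hc.comp (by fun_prop)) (by fun_prop)) fun q => by
        have hq : |(q : ℝ)| = (q.num.natAbs : ℝ) / q.den := by
          rw [Rat.cast_def, abs_div, Nat.cast_natAbs, Int.cast_abs, Nat.abs_cast]
        rw [hq, hS.map_div_mul]
  simpa [abs_of_nonneg hu] using habs u

end IsBerzSublinear

/-- Theorem 5 (Baire–Berz Theorem): a Baire-measurable sublinear `S : ℝ → ℝ` is linear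
on each half-line: `S(u) = c₊u` for `u ≥ 0` and `S(v) = c₋v` for `v ≤ 0`. -/
theorem theorem5 (S : ℝ → ℝ)
    (hBaire : ∀ U : Set ℝ, IsOpen U → BaireMeasurableSet (S ⁻¹' U))
    (hsub : ∀ u v : ℝ, S (u + v) ≤ S u + S v)
    (hhom : ∀ x : ℝ, ∀ n : ℕ, S ((n : ℝ) * x) = (n : ℝ) * S x) :
    ∃ cp cm : ℝ, (∀ u : ℝ, 0 ≤ u → S u = cp * u) ∧ (∀ v : ℝ, v ≤ 0 → S v = cm * v) := by
  have hS : IsBerzSublinear S := ⟨hsub, hhom⟩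
  obtain ⟨V, hV, ⟨c, hc⟩, M, hM⟩ := exists_isOpen_forall_le_of_subadditive hBaire hsub
  have hcont : Continuous S :=
    hS.continuous fun _ hε => hS.eventually_nhds_zero_lt (hS.eventually_nhds_zero_le hV hc hM) hε
  refine ⟨S 1, -S (-1), fun u hu => ?_, fun v hv => ?_⟩
  · simpa [mul_comm] using hS.map_mul_of_nonneg hcont 1 hu
  · simpa [mul_comm] using hS.map_mul_of_nonneg hcont (-1) (neg_nonneg.2 hv)
end
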